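/- arXiv:2406.03837 — 7 statements merged into one kernel-verified Lean document; each statement's English description precedes it below -/
import Mathlib

section
/- The operator A defined on L^p([0,1]) by A[X](z) = v(∫₀¹ U(X(z)-X(ζ)) dζ - λz) is Lipschitz continuous with Lipschitz constant 2^((p+1)/p) · Lip(v) · Lip(U) for 1 ≤ p < ∞. -/
open MeasureTheory

/-! Writing `d = |X₁ - X₂|`, the Lipschitz bounds on `v` and `U` give pointwise
`|A X₁ z - A X₂ z| ≤ Lv LU (d z + ∫ d)`. On the probability space `[0,1]` Jensen's inequality
gives `(∫ d)^p ≤ ∫ d^p`, so with `(a + b)^p ≤ 2^(p-1) (a^p + b^p)` the `L^p` norm of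
`A X₁ - A X₂` is at most `2 Lv LU ‖X₁ - X₂‖_p`, and `2 ≤ 2^((p+1)/p)`. -/

lemma nonneg_of_abs_sub_le_mul {f : ℝ → ℝ} {L : ℝ} (hf : ∀ a b, |f a - f b| ≤ L * |a - b|) :
    0 ≤ L := by
  simpa using (abs_nonneg _).trans (hf 1 0)

lemma lipschitzWith_of_abs_sub_le_mul {f : ℝ → ℝ} {L : ℝ} (hf : ∀ a b, |f a - f b| ≤ L * |a - b|) :
    LipschitzWith L.toNNReal f :=
  LipschitzWith.of_dist_le_mul fun a b => by
    simpa [Real.dist_eq, Real.coe_toNNReal L (nonneg_of_abs_sub_le_mul hf)] using hf a b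

lemma Real.rpow_add_le_mul_rpow_add_rpow {a b p : ℝ} (ha : 0 ≤ a) (hb : 0 ≤ b) (hp : 1 ≤ p) :
    (a + b) ^ p ≤ 2 ^ (p - 1) * (a ^ p + b ^ p) := by
  exact_mod_cast NNReal.rpow_add_le_mul_rpow_add_rpow ⟨a, ha⟩ ⟨b, hb⟩ hp

section

variable {α : Type*} [MeasurableSpace α] {μ : Measure α}

/-- Stated for the difference of the integrals, not the integral of the difference: if `f₁` is
not integrable then neither is `f₂`, and both integrals take the junk value `0`. -/
lemma abs_integral_sub_integral_le {f₁ f₂ g : α → ℝ} (hg : Integrable g μ)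
    (hm : AEStronglyMeasurable (fun x => f₁ x - f₂ x) μ) (h : ∀ x, |f₁ x - f₂ x| ≤ g x) :
    |∫ x, f₁ x ∂μ - ∫ x, f₂ x ∂μ| ≤ ∫ x, g x ∂μ := by
  have hdiff : Integrable (fun x => f₁ x - f₂ x) μ := hg.mono' hm (.of_forall h)
  by_cases h₁ : Integrable f₁ μ
  · have h₂ : Integrable f₂ μ := (h₁.sub hdiff).congr (.of_forall fun x => sub_sub_cancel _ _)
    rw [← integral_sub h₁ h₂]
    exact norm_integral_le_of_norm_le hg (.of_forall fun x => (Real.norm_eq_abs _).trans_le (h x))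
  · have h₂ : ¬Integrable f₂ μ := fun h₂ =>
      h₁ ((h₂.add hdiff).congr (.of_forall fun x => add_sub_cancel _ _))
    rw [integral_undef h₁, integral_undef h₂, sub_zero, abs_zero]
    exact integral_nonneg fun x => (abs_nonneg _).trans (h x)

variable [IsProbabilityMeasure μ]

lemma integral_rpow_le_of_abs_le_mul_add_integral {p c : ℝ} {f d : α → ℝ} (hp : 1 ≤ p)
    (hc : 0 ≤ c) (hd0 : ∀ x, 0 ≤ d x) (hd : Integrable d μ)
    (hdp : Integrable (fun x => d x ^ p) μ) (hf : ∀ x, |f x| ≤ c * (d x + ∫ y, d y ∂μ)) :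
    ∫ x, |f x| ^ p ∂μ ≤ (2 * c) ^ p * ∫ x, d x ^ p ∂μ := by
  set I := ∫ y, d y ∂μ
  set J := ∫ x, d x ^ p ∂μ
  have hI : 0 ≤ I := integral_nonneg hd0
  have hp0 : 0 ≤ p := zero_le_one.trans hp
  have jensen : I ^ p ≤ J :=
    (convexOn_rpow hp).map_integral_le (Real.continuous_rpow_const hp0).continuousOn
      isClosed_Ici (.of_forall hd0) hd hdp
  have hpt : ∀ x, |f x| ^ p ≤ c ^ p * (2 ^ (p - 1) * (d x ^ p + I ^ p)) := fun x =>
    calc |f x| ^ p ≤ (c * (d x + I)) ^ p := by gcongr; exact hf x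
      _ = c ^ p * (d x + I) ^ p := Real.mul_rpow hc (by linarith [hd0 x])
      _ ≤ c ^ p * (2 ^ (p - 1) * (d x ^ p + I ^ p)) := by
        gcongr; exact Real.rpow_add_le_mul_rpow_add_rpow (hd0 x) hI hp
  calc ∫ x, |f x| ^ p ∂μ ≤ ∫ x, c ^ p * (2 ^ (p - 1) * (d x ^ p + I ^ p)) ∂μ :=
        integral_mono_of_nonneg (.of_forall fun x => by positivity)
          (((hdp.add (integrable_const _)).const_mul _).const_mul _) (.of_forall hpt)
    _ = c ^ p * (2 ^ (p - 1) * (J + I ^ p)) := by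
        rw [integral_const_mul, integral_const_mul, integral_add hdp (integrable_const _),
          integral_const, probReal_univ, one_smul]
    _ ≤ c ^ p * (2 ^ (p - 1) * (J + J)) := by gcongr
    _ = (2 * c) ^ p * J := by
        rw [Real.mul_rpow zero_le_two hc, Real.rpow_sub_one two_ne_zero]; ring

lemma abs_integral_comp_sub_sub_integral_comp_sub_le {U : ℝ → ℝ} {L : ℝ}
    (hU : ∀ a b, |U a - U b| ≤ L * |a - b|) {X₁ X₂ : α → ℝ} (hX₁ : Measurable X₁)
    (hX₂ : Measurable X₂) (hd : Integrable (fun ζ => |X₁ ζ - X₂ ζ|) μ) (z : α) :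
    |∫ ζ, U (X₁ z - X₁ ζ) ∂μ - ∫ ζ, U (X₂ z - X₂ ζ) ∂μ| ≤
      L * (|X₁ z - X₂ z| + ∫ ζ, |X₁ ζ - X₂ ζ| ∂μ) := by
  have hUm : Measurable U := (lipschitzWith_of_abs_sub_le_mul hU).continuous.measurable
  have hpt : ∀ ζ, |U (X₁ z - X₁ ζ) - U (X₂ z - X₂ ζ)| ≤ L * (|X₁ z - X₂ z| + |X₁ ζ - X₂ ζ|) :=
    fun ζ => (hU _ _).trans <| mul_le_mul_of_nonneg_left
      (by rw [sub_sub_sub_comm]; exact abs_sub _ _) (nonneg_of_abs_sub_le_mul hU)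
  refine (abs_integral_sub_integral_le (((integrable_const _).add hd).const_mul L)
    ((hUm.comp (measurable_const.sub hX₁)).sub
      (hUm.comp (measurable_const.sub hX₂))).aestronglyMeasurable hpt).trans_eq ?_
  rw [integral_const_mul, integral_add' (integrable_const _) hd, integral_const, probReal_univ,
    one_smul]

end

theorem stmt_0_general (p Lv LU lam : ℝ) (hp : 1 ≤ p)
    (v U : ℝ → ℝ)
    (hv : ∀ a b : ℝ, |v a - v b| ≤ Lv * |a - b|)
    (hU : ∀ a b : ℝ, |U a - U b| ≤ LU * |a - b|)
    (A : (ℝ → ℝ) → ℝ → ℝ)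
    (hA : ∀ X z, A X z = v ((∫ ζ in (0:ℝ)..1, U (X z - X ζ)) - lam * z))
    (X₁ X₂ : ℝ → ℝ) (hX₁ : Measurable X₁) (hX₂ : Measurable X₂)
    (hint : IntegrableOn (fun z => |X₁ z - X₂ z| ^ p) (Set.Icc (0:ℝ) 1)) :
    (∫ z in Set.Icc (0:ℝ) 1, |A X₁ z - A X₂ z| ^ p) ^ (1/p) ≤
      (2 : ℝ) ^ ((p + 1) / p) * Lv * LU *
        (∫ z in Set.Icc (0:ℝ) 1, |X₁ z - X₂ z| ^ p) ^ (1/p) := by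
  set μ := volume.restrict (Set.Icc (0:ℝ) 1)
  have : IsProbabilityMeasure μ := ⟨by simp [μ, Real.volume_Icc]⟩
  have hp0 : 0 < p := zero_lt_one.trans_le hp
  have hdp : Integrable (fun z => |X₁ z - X₂ z| ^ p) μ := hint
  have hd : Integrable (fun z => |X₁ z - X₂ z|) μ := by
    simpa only [Real.norm_eq_abs, Real.rpow_one, Pi.sub_apply] using
      integrable_norm_rpow_of_le (hX₁.sub hX₂).aestronglyMeasurable zero_le_one hp0.le hp
        (by simpa only [Real.norm_eq_abs, Pi.sub_apply] using hdp)
  have hpt : ∀ z, |A X₁ z - A X₂ z| ≤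
      Lv * LU * (|X₁ z - X₂ z| + ∫ ζ, |X₁ ζ - X₂ ζ| ∂μ) := fun z => by
    simp only [hA, intervalIntegral.integral_of_le zero_le_one, ← integral_Icc_eq_integral_Ioc]
    refine (hv _ _).trans ?_
    rw [sub_sub_sub_cancel_right, mul_assoc]
    exact mul_le_mul_of_nonneg_left (abs_integral_comp_sub_sub_integral_comp_sub_le hU hX₁ hX₂ hd z)
      (nonneg_of_abs_sub_le_mul hv)
  have hJ : 0 ≤ ∫ z, |X₁ z - X₂ z| ^ p ∂μ := integral_nonneg fun z => by positivity
  have hc : 0 ≤ Lv * LU := mul_nonneg (nonneg_of_abs_sub_le_mul hv) (nonneg_of_abs_sub_le_mul hU)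
  calc (∫ z, |A X₁ z - A X₂ z| ^ p ∂μ) ^ (1/p)
      ≤ ((2 * (Lv * LU)) ^ p * ∫ z, |X₁ z - X₂ z| ^ p ∂μ) ^ (1/p) := by
        gcongr
        exact integral_rpow_le_of_abs_le_mul_add_integral hp hc (fun z => abs_nonneg _) hd hdp hpt
    _ = 2 * (Lv * LU) * (∫ z, |X₁ z - X₂ z| ^ p ∂μ) ^ (1/p) := by
        rw [one_div, Real.mul_rpow (by positivity) hJ, Real.rpow_rpow_inv (by positivity) hp0.ne']
    _ ≤ (2 : ℝ) ^ ((p + 1) / p) * (Lv * LU) * (∫ z, |X₁ z - X₂ z| ^ p ∂μ) ^ (1/p) := by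
        refine mul_le_mul_of_nonneg_right (mul_le_mul_of_nonneg_right ?_ hc) (by positivity)
        exact Real.self_le_rpow_of_one_le one_le_two ((le_div_iff₀ hp0).2 (by linarith))
    _ = (2 : ℝ) ^ ((p + 1) / p) * Lv * LU * (∫ z, |X₁ z - X₂ z| ^ p ∂μ) ^ (1/p) := by ring

/-- The operator `A[X](z) = v(∫₀¹ U(X(z)-X(ζ)) dζ - λ z)` is Lipschitz on `L^p([0,1])`
with constant `2^((p+1)/p) · Lip(v) · Lip(U)`, for `1 ≤ p < ∞`. -/
theorem stmt_0 (p Lv LU lam : ℝ) (hp : 1 ≤ p) (hLv : 0 ≤ Lv) (hLU : 0 ≤ LU) (hlam : 0 < lam)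
    (v U : ℝ → ℝ)
    (hv : ∀ a b : ℝ, |v a - v b| ≤ Lv * |a - b|)
    (hU : ∀ a b : ℝ, |U a - U b| ≤ LU * |a - b|)
    (A : (ℝ → ℝ) → ℝ → ℝ)
    (hA : ∀ X z, A X z = v ((∫ ζ in (0:ℝ)..1, U (X z - X ζ)) - lam * z))
    (X₁ X₂ : ℝ → ℝ) (hX₁ : Measurable X₁) (hX₂ : Measurable X₂)
    (hint : IntegrableOn (fun z => |X₁ z - X₂ z| ^ p) (Set.Icc (0:ℝ) 1)) :
    (∫ z in Set.Icc (0:ℝ) 1, |A X₁ z - A X₂ z| ^ p) ^ (1/p) ≤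
      (2 : ℝ) ^ ((p + 1) / p) * Lv * LU *
        (∫ z in Set.Icc (0:ℝ) 1, |X₁ z - X₂ z| ^ p) ^ (1/p) :=
  stmt_0_general p Lv LU lam hp v U hv hU A hA X₁ X₂ hX₁ hX₂ hint
end

section
/- Let v, U : ℝ → ℝ be Lipschitz, λ > 0, b > 0, and assume v(ρ₂) - v(ρ₁) ≤ -b(ρ₂-ρ₁) for ρ₂ ≥ ρ₁. Suppose X(·,t) solves ∂ₜX(z,t) = v(∫₀¹ U(X(z,t)-X(ζ,t))dζ - λz) with X(·,0) non-decreasing. Then for all t > 0 and 0 ≤ z₁ < z₂ ≤ 1, X(z₂,t) - X(z₁,t) ≥ (bλ(z₂-z₁)/(Lip(v)Lip(U)))·(1 - e^{-Lip(v)Lip(U)t}); in particular X(·,t) is strictly increasing for t > 0. -/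
/-! Strict decrease of `v` makes the velocity at `z₂` exceed the one at `z₁` by at least
`bλ(z₂ - z₁)` whenever the two particles meet, so the flow preserves monotonicity. For a monotone
profile the interaction integral is `Lip(U)`-Lipschitz in the particle position, hence the gap
`D = X(z₂,·) - X(z₁,·)` satisfies `D' ≥ bλ(z₂ - z₁) - Lip(v) Lip(U) D` with `D(0) ≥ 0`, and
Grönwall's inequality gives the bound. -/

open Set MeasureTheory intervalIntegral

section LipschitzDecreasing

variable {v : ℝ → ℝ} {Lv b : ℝ}

theorem le_of_abs_sub_le_mul_of_sub_le_neg_mul (hv : ∀ a b' : ℝ, |v a - v b'| ≤ Lv * |a - b'|)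
    (hvdec : ∀ r₁ r₂ : ℝ, r₁ ≤ r₂ → v r₂ - v r₁ ≤ -b * (r₂ - r₁)) : b ≤ Lv := by
  have hdec := hvdec 0 1 zero_le_one
  have hlip := hv 1 0
  simp only [sub_zero, abs_one, mul_one] at hdec hlip
  linarith [neg_le_abs (v 1 - v 0)]

theorem mul_sub_mul_le_sub_of_sub_le_sub (hv : ∀ a b' : ℝ, |v a - v b'| ≤ Lv * |a - b'|)
    (hvdec : ∀ r₁ r₂ : ℝ, r₁ ≤ r₂ → v r₂ - v r₁ ≤ -b * (r₂ - r₁)) (hb : 0 ≤ b)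
    {r₁ r₂ E F : ℝ} (hE : 0 ≤ E) (hF : 0 ≤ F) (h : r₂ - r₁ ≤ E - F) :
    b * F - Lv * E ≤ v r₂ - v r₁ := by
  have hbLv := le_of_abs_sub_le_mul_of_sub_le_neg_mul hv hvdec
  rcases le_total r₂ r₁ with hr | hr
  · have hslope := hvdec r₂ r₁ hr
    have : b * (F - E) ≤ b * (r₁ - r₂) := mul_le_mul_of_nonneg_left (by linarith) hb
    linarith [mul_le_mul_of_nonneg_right hbLv hE]
  · have hslope := hv r₂ r₁
    rw [abs_of_nonneg (sub_nonneg.mpr hr)] at hslope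
    have : Lv * (r₂ - r₁) ≤ Lv * (E - F) := mul_le_mul_of_nonneg_left h (hb.trans hbLv)
    linarith [neg_abs_le (v r₂ - v r₁), mul_le_mul_of_nonneg_right hbLv hF]

end LipschitzDecreasing

section Interaction

variable {U : ℝ → ℝ} {LU : ℝ}

theorem intervalIntegrable_comp_sub (hU : ∀ a b' : ℝ, |U a - U b'| ≤ LU * |a - b'|)
    {f : ℝ → ℝ} {a b : ℝ} (hf : IntervalIntegrable f volume a b) (w : ℝ) :
    IntervalIntegrable (fun ζ => U (w - f ζ)) volume a b := by
  have hUc : Continuous U := by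
    refine (LipschitzWith.of_dist_le_mul (K := LU.toNNReal) fun x y => ?_).continuous
    rw [Real.dist_eq, Real.dist_eq]
    exact (hU x y).trans (mul_le_mul_of_nonneg_right (LU.le_coe_toNNReal) (abs_nonneg _))
  refine (intervalIntegrable_const (c := |U w|)).add (hf.abs.const_mul LU) |>.mono_fun' ?_ ?_
  · exact hUc.comp_aestronglyMeasurable
      (aestronglyMeasurable_const.sub hf.def'.aestronglyMeasurable)
  · refine ae_of_all _ fun ζ => ?_
    have := hU (w - f ζ) w
    rw [show w - f ζ - w = -f ζ by ring, abs_neg] at this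
    simp only [Real.norm_eq_abs]
    linarith [abs_sub_abs_le_abs_sub (U (w - f ζ)) (U w)]

theorem integral_comp_sub_sub_integral_comp_sub_le
    (hU : ∀ a b' : ℝ, |U a - U b'| ≤ LU * |a - b'|) {f : ℝ → ℝ} {a b : ℝ} (hab : a ≤ b)
    (hf : IntervalIntegrable f volume a b) {w₁ w₂ : ℝ} (hw : w₁ ≤ w₂) :
    (∫ ζ in a..b, U (w₂ - f ζ)) - ∫ ζ in a..b, U (w₁ - f ζ) ≤ (b - a) * (LU * (w₂ - w₁)) := by
  rw [← integral_sub (intervalIntegrable_comp_sub hU hf w₂) (intervalIntegrable_comp_sub hU hf w₁),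
    ← smul_eq_mul, ← intervalIntegral.integral_const]
  refine integral_mono_on hab ((intervalIntegrable_comp_sub hU hf w₂).sub
    (intervalIntegrable_comp_sub hU hf w₁)) intervalIntegrable_const fun ζ _ => ?_
  have := hU (w₂ - f ζ) (w₁ - f ζ)
  rw [show w₂ - f ζ - (w₁ - f ζ) = w₂ - w₁ by ring, abs_of_nonneg (sub_nonneg.mpr hw)] at this
  exact (le_abs_self _).trans this

end Interaction

noncomputable def quantileVelocity (v U : ℝ → ℝ) (lam : ℝ) (f : ℝ → ℝ) (z : ℝ) : ℝ :=
  v ((∫ ζ in (0:ℝ)..1, U (f z - f ζ)) - lam * z)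

def IsQuantileFlow (v U : ℝ → ℝ) (lam : ℝ) (X : ℝ → ℝ → ℝ) : Prop :=
  ∀ z ∈ Icc (0:ℝ) 1, ∀ t, 0 ≤ t →
    HasDerivAt (X z) (quantileVelocity v U lam (fun ζ => X ζ t) z) t

section QuantileFlow

variable {v U : ℝ → ℝ} {Lv LU lam b : ℝ}

theorem quantileVelocity_sub_pos_of_eq
    (hvdec : ∀ r₁ r₂ : ℝ, r₁ ≤ r₂ → v r₂ - v r₁ ≤ -b * (r₂ - r₁)) (hb : 0 < b) (hlam : 0 < lam)
    {f : ℝ → ℝ} {z₁ z₂ : ℝ} (hz : z₁ < z₂) (hf : f z₁ = f z₂) :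
    0 < quantileVelocity v U lam f z₂ - quantileVelocity v U lam f z₁ := by
  unfold quantileVelocity
  rw [hf]
  set I := ∫ ζ in (0:ℝ)..1, U (f z₂ - f ζ)
  have hslope := hvdec (I - lam * z₂) (I - lam * z₁) (by nlinarith)
  nlinarith [mul_pos hb (mul_pos hlam (sub_pos.mpr hz))]

theorem mul_sub_le_quantileVelocity_sub (hv : ∀ a b' : ℝ, |v a - v b'| ≤ Lv * |a - b'|)
    (hU : ∀ a b' : ℝ, |U a - U b'| ≤ LU * |a - b'|)
    (hvdec : ∀ r₁ r₂ : ℝ, r₁ ≤ r₂ → v r₂ - v r₁ ≤ -b * (r₂ - r₁))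
    (hb : 0 ≤ b) (hLU : 0 ≤ LU) (hlam : 0 ≤ lam) {f : ℝ → ℝ} (hf : MonotoneOn f (Icc 0 1))
    {z₁ z₂ : ℝ} (hz₁ : 0 ≤ z₁) (hz : z₁ ≤ z₂) (hz₂ : z₂ ≤ 1) :
    b * lam * (z₂ - z₁) - Lv * LU * (f z₂ - f z₁) ≤
      quantileVelocity v U lam f z₂ - quantileVelocity v U lam f z₁ := by
  have hfz : f z₁ ≤ f z₂ := hf ⟨hz₁, hz.trans hz₂⟩ ⟨hz₁.trans hz, hz₂⟩ hz
  have hfi : IntervalIntegrable f volume 0 1 :=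
    (uIcc_of_le (zero_le_one' ℝ) ▸ hf).intervalIntegrable
  have hI := integral_comp_sub_sub_integral_comp_sub_le hU zero_le_one hfi hfz
  rw [sub_zero, one_mul] at hI
  have := mul_sub_mul_le_sub_of_sub_le_sub hv hvdec hb (mul_nonneg hLU (sub_nonneg.mpr hfz))
    (mul_nonneg hlam (sub_nonneg.mpr hz)) (r₁ := (∫ ζ in (0:ℝ)..1, U (f z₁ - f ζ)) - lam * z₁)
    (r₂ := (∫ ζ in (0:ℝ)..1, U (f z₂ - f ζ)) - lam * z₂) (by linarith)
  unfold quantileVelocity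
  linarith

variable {X : ℝ → ℝ → ℝ}

theorem IsQuantileFlow.hasDerivAt_sub (hX : IsQuantileFlow v U lam X) {z₁ z₂ : ℝ}
    (hz₁ : z₁ ∈ Icc (0:ℝ) 1) (hz₂ : z₂ ∈ Icc (0:ℝ) 1) {t : ℝ} (ht : 0 ≤ t) :
    HasDerivAt (fun τ => X z₁ τ - X z₂ τ)
      (quantileVelocity v U lam (fun ζ => X ζ t) z₁ -
        quantileVelocity v U lam (fun ζ => X ζ t) z₂) t :=
  (hX z₁ hz₁ t ht).sub (hX z₂ hz₂ t ht)

theorem IsQuantileFlow.monotoneOn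
    (hvdec : ∀ r₁ r₂ : ℝ, r₁ ≤ r₂ → v r₂ - v r₁ ≤ -b * (r₂ - r₁)) (hb : 0 < b) (hlam : 0 < lam)
    (hX : IsQuantileFlow v U lam X) (hinit : MonotoneOn (fun z => X z 0) (Icc 0 1))
    {t : ℝ} (ht : 0 ≤ t) : MonotoneOn (fun z => X z t) (Icc 0 1) := by
  intro z₁ hz₁ z₂ hz₂ hz
  rcases hz.eq_or_lt with rfl | hlt
  · exact le_rfl
  have hgap := image_le_of_deriv_right_lt_deriv_boundary (B := fun _ => 0) (B' := fun _ => 0)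
    (fun τ hτ => (hX.hasDerivAt_sub hz₁ hz₂ hτ.1).continuousAt.continuousWithinAt)
    (fun τ hτ => (hX.hasDerivAt_sub hz₁ hz₂ hτ.1).hasDerivWithinAt)
    (sub_nonpos.mpr (hinit hz₁ hz₂ hz)) (fun τ => hasDerivAt_const τ 0)
    (fun τ _ hτ => sub_neg.mpr
      (sub_pos.mp (quantileVelocity_sub_pos_of_eq hvdec hb hlam hlt (sub_eq_zero.mp hτ))))
    ⟨ht, le_rfl⟩
  exact sub_nonpos.mp hgap

theorem IsQuantileFlow.div_mul_one_sub_exp_le_sub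
    (hv : ∀ a b' : ℝ, |v a - v b'| ≤ Lv * |a - b'|)
    (hU : ∀ a b' : ℝ, |U a - U b'| ≤ LU * |a - b'|)
    (hvdec : ∀ r₁ r₂ : ℝ, r₁ ≤ r₂ → v r₂ - v r₁ ≤ -b * (r₂ - r₁))
    (hLv : 0 < Lv) (hLU : 0 < LU) (hb : 0 < b) (hlam : 0 < lam)
    (hX : IsQuantileFlow v U lam X) (hinit : MonotoneOn (fun z => X z 0) (Icc 0 1))
    {t : ℝ} (ht : 0 ≤ t) {z₁ z₂ : ℝ} (hz₁ : 0 ≤ z₁) (hz : z₁ ≤ z₂) (hz₂ : z₂ ≤ 1) :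
    b * lam * (z₂ - z₁) / (Lv * LU) * (1 - Real.exp (-(Lv * LU) * t)) ≤ X z₂ t - X z₁ t := by
  have hz₁' : z₁ ∈ Icc (0:ℝ) 1 := ⟨hz₁, hz.trans hz₂⟩
  have hz₂' : z₂ ∈ Icc (0:ℝ) 1 := ⟨hz₁.trans hz, hz₂⟩
  have hK : -(Lv * LU) ≠ 0 := neg_ne_zero.mpr (mul_pos hLv hLU).ne'
  have hgron := le_gronwallBound_of_liminf_deriv_right_le (δ := 0) (K := -(Lv * LU))
    (ε := -(b * lam * (z₂ - z₁)))
    (fun τ hτ => (hX.hasDerivAt_sub hz₁' hz₂' hτ.1).continuousAt.continuousWithinAt)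
    (fun τ hτ _ hr => (hX.hasDerivAt_sub hz₁' hz₂' hτ.1).hasDerivWithinAt.liminf_right_slope_le hr)
    (sub_nonpos.mpr (hinit hz₁' hz₂' hz))
    (fun τ hτ => by
      have := mul_sub_le_quantileVelocity_sub hv hU hvdec hb.le hLU.le hlam.le
        (hX.monotoneOn hvdec hb hlam hinit hτ.1) hz₁ hz hz₂
      linarith)
    t ⟨ht, le_rfl⟩
  simp only [gronwallBound_of_K_ne_0 hK, neg_div_neg_eq, sub_zero, zero_mul, zero_add] at hgron
  linarith

end QuantileFlow

/-- Smoothing estimate for the quantile equation: if `X(·,0)` is non-decreasing then for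
`t > 0` and `z₁ < z₂`,
`X(z₂,t) - X(z₁,t) ≥ (bλ(z₂-z₁)/(Lip(v)Lip(U))) (1 - e^{-Lip(v)Lip(U)t})`;
in particular `X(·,t)` is strictly increasing for `t > 0`. -/
theorem stmt_9 (Lv LU lam b : ℝ) (hLv : 0 < Lv) (hLU : 0 < LU) (hlam : 0 < lam) (hb : 0 < b)
    (v U : ℝ → ℝ)
    (hv : ∀ a b' : ℝ, |v a - v b'| ≤ Lv * |a - b'|)
    (hU : ∀ a b' : ℝ, |U a - U b'| ≤ LU * |a - b'|)
    (hvdec : ∀ r₁ r₂ : ℝ, r₁ ≤ r₂ → v r₂ - v r₁ ≤ -b * (r₂ - r₁))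
    (X : ℝ → ℝ → ℝ)
    (hode : ∀ z ∈ Set.Icc (0:ℝ) 1, ∀ t, 0 ≤ t →
      HasDerivAt (X z) (v ((∫ ζ in (0:ℝ)..1, U (X z t - X ζ t)) - lam * z)) t)
    (hinit : MonotoneOn (fun z => X z 0) (Set.Icc (0:ℝ) 1)) :
    ∀ t, 0 < t →
      (∀ z₁ z₂ : ℝ, 0 ≤ z₁ → z₁ < z₂ → z₂ ≤ 1 →
        X z₂ t - X z₁ t ≥
          b * lam * (z₂ - z₁) / (Lv * LU) * (1 - Real.exp (-(Lv * LU) * t))) ∧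
      StrictMonoOn (fun z => X z t) (Set.Icc (0:ℝ) 1) := by
  have hX : IsQuantileFlow v U lam X := hode
  intro t ht
  have hgap {z₁ z₂ : ℝ} (hz₁ : 0 ≤ z₁) (hz : z₁ ≤ z₂) (hz₂ : z₂ ≤ 1) :=
    hX.div_mul_one_sub_exp_le_sub hv hU hvdec hLv hLU hb hlam hinit ht.le hz₁ hz hz₂
  refine ⟨fun z₁ z₂ hz₁ hz hz₂ => hgap hz₁ hz.le hz₂, fun z₁ hz₁ z₂ hz₂ hz => ?_⟩
  have hexp : Real.exp (-(Lv * LU) * t) < 1 :=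
    Real.exp_lt_one_iff.mpr (mul_neg_of_neg_of_pos (neg_neg_of_pos (mul_pos hLv hLU)) ht)
  have hpos : 0 < b * lam * (z₂ - z₁) / (Lv * LU) * (1 - Real.exp (-(Lv * LU) * t)) := by
    have := sub_pos.mpr hz
    have := sub_pos.mpr hexp
    positivity
  linarith [hgap hz₁.1 hz.le hz₂.2]
end

section
/- Under the assumptions of the quantile equation (v Lipschitz and strictly decreasing with slope ≤ -b, U Lipschitz, λ > 0), the pushforward measure ρ(·,t) of Lebesgue measure under X(·,t) satisfies ‖ρ(·,t)‖_{L^∞} ≤ (Lip(v)Lip(U)/(bλ))·(1 - e^{-Lip(v)Lip(U)t})^{-1} for all t > 0. -/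
/-!
For `z₁ ≤ z₂` the gap `D = X z₂ - X z₁` satisfies `D' ≥ bλ(z₂ - z₁) - Lip(v)Lip(U)|D|`:
the interaction integral is `Lip(U)`-Lipschitz in the position, and `v` decreases at rate `b`.
Comparing with the solution of `y' = bλ(z₂ - z₁) - Lip(v)Lip(U) y`, `y 0 = 0`, gives the lower
slope bound, so `X(·,t)` is antilipschitz on `[0,1]`. Antilipschitz maps do not decrease
one-dimensional Hausdorff measure, which is Lebesgue measure on `ℝ`; this bounds `ρ(A)` by the
inverse slope times `|A|`.
-/

open MeasureTheory Set

theorem abs_intervalIntegral_sub_le_of_abs_sub_le {f g : ℝ → ℝ} {a b C : ℝ}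
    (hf : AEStronglyMeasurable f) (hg : AEStronglyMeasurable g) (hfg : ∀ x, |f x - g x| ≤ C) :
    |(∫ x in a..b, f x) - ∫ x in a..b, g x| ≤ C * |b - a| := by
  have hdiff : IntervalIntegrable (fun x => f x - g x) volume a b :=
    (intervalIntegrable_const (c := C)).mono_fun (hf.sub hg).restrict (Filter.Eventually.of_forall
      fun x => (hfg x).trans (le_abs_self C))
  by_cases hgi : IntervalIntegrable g volume a b
  · have hfi : IntervalIntegrable f volume a b := by simpa using hdiff.add hgi
    rw [← intervalIntegral.integral_sub hfi hgi]
    exact intervalIntegral.norm_integral_le_of_norm_le_const fun x _ =>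
      (Real.norm_eq_abs _).trans_le (hfg x)
  · have hfi : ¬IntervalIntegrable f volume a b := fun hfi => hgi (by simpa using hfi.sub hdiff)
    rw [intervalIntegral.integral_undef hfi, intervalIntegral.integral_undef hgi, sub_zero,
      abs_zero]
    exact mul_nonneg ((abs_nonneg _).trans (hfg 0)) (abs_nonneg _)

theorem nonpos_of_deriv_le_mul_of_pos {u u' : ℝ → ℝ} {K a b : ℝ}
    (hu : ContinuousOn u (Icc a b)) (hu' : ∀ x ∈ Ico a b, HasDerivWithinAt u (u' x) (Ici x) x)
    (ha : u a ≤ 0) (bound : ∀ x ∈ Ico a b, 0 < u x → u' x ≤ K * u x) :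
    ∀ ⦃x⦄, x ∈ Icc a b → u x ≤ 0 := by
  set L := |K| + 1
  -- fence `u` by `ε e^{L (x - a)}`, whose growth rate `L` strictly beats `K`
  have fence : ∀ ε > 0, ∀ x ∈ Icc a b, u x ≤ ε * Real.exp (L * (x - a)) := by
    intro ε hε
    refine image_le_of_deriv_right_lt_deriv_boundary hu hu'
      (B' := fun x => ε * Real.exp (L * (x - a)) * L) (by simpa using ha.trans hε.le)
      (fun x => ?_) fun x hx hux => ?_
    · exact (((hasDerivAt_id x).sub_const a).const_mul L).exp.const_mul ε |>.congr_deriv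
        (by simp only [id]; ring)
    · have hpos : 0 < ε * Real.exp (L * (x - a)) := by positivity
      calc u' x ≤ K * u x := bound x hx (hux ▸ hpos)
        _ < u x * L := by rw [hux]; nlinarith [le_abs_self K]
        _ = ε * Real.exp (L * (x - a)) * L := by rw [hux]
  intro x hx
  refine le_of_forall_pos_le_add fun δ hδ => ?_
  have hexp := Real.exp_pos (L * (x - a))
  calc u x ≤ δ / Real.exp (L * (x - a)) * Real.exp (L * (x - a)) := fence _ (by positivity) x hx
    _ = 0 + δ := by field_simp; ring

theorem le_of_deriv_ge_sub_mul_abs {D D' : ℝ → ℝ} {a K t : ℝ} (ha : 0 ≤ a) (hK : 0 < K)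
    (ht : 0 ≤ t) (hD : ∀ s ∈ Icc 0 t, HasDerivAt D (D' s) s)
    (hD' : ∀ s ∈ Ico 0 t, a - K * |D s| ≤ D' s) (hD0 : 0 ≤ D 0) :
    a / K * (1 - Real.exp (-K * t)) ≤ D t := by
  set y : ℝ → ℝ := fun s => a / K * (1 - Real.exp (-K * s))
  have hy : ∀ s, HasDerivAt y (a * Real.exp (-K * s)) s := fun s =>
    ((((hasDerivAt_id s).const_mul (-K)).exp.const_sub 1).const_mul (a / K)).congr_deriv
      (by simp only [id]; field_simp)
  have hy_nonneg : ∀ s, 0 ≤ s → 0 ≤ y s := fun s hs =>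
    mul_nonneg (div_nonneg ha hK.le)
      (sub_nonneg.2 (Real.exp_le_one_iff.2 (by nlinarith)))
  have hu : ∀ s ∈ Icc 0 t, HasDerivAt (fun s => y s - D s) (a * Real.exp (-K * s) - D' s) s :=
    fun s hs => (hy s).sub (hD s hs)
  have bound : ∀ s ∈ Ico 0 t, 0 < y s - D s →
      a * Real.exp (-K * s) - D' s ≤ K * (y s - D s) := by
    intro s hs hpos
    have hys := hy_nonneg s hs.1
    have hyK : a * Real.exp (-K * s) = a - K * y s := by
      simp only [y]; field_simp; ring
    have habs : |D s| - y s ≤ y s - D s := by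
      rcases abs_cases (D s) with ⟨h, _⟩ | ⟨h, _⟩ <;> linarith
    linarith [hD' s hs, mul_le_mul_of_nonneg_left habs hK.le]
  have := nonpos_of_deriv_le_mul_of_pos (fun s hs => (hu s hs).continuousAt.continuousWithinAt)
    (fun s hs => (hu s (Ico_subset_Icc_self hs)).hasDerivWithinAt)
    (by simpa [y] using hD0) bound ⟨ht, le_rfl⟩
  simpa [y] using this

theorem le_apply_sub_apply_of_lipschitz_of_decreasing {v : ℝ → ℝ} {Lv b : ℝ}
    (hv : ∀ a b' : ℝ, |v a - v b'| ≤ Lv * |a - b'|)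
    (hvdec : ∀ r₁ r₂ : ℝ, r₁ ≤ r₂ → v r₂ - v r₁ ≤ -b * (r₂ - r₁))
    {x₁ x₂ w₁ w₂ : ℝ} (hw : w₁ ≤ w₂) :
    b * (w₂ - w₁) - Lv * |x₂ - x₁| ≤ v (x₂ - w₂) - v (x₁ - w₁) := by
  have hLip := neg_le_of_abs_le (hv (x₂ - w₂) (x₁ - w₂))
  have hdec := hvdec (x₁ - w₂) (x₁ - w₁) (by linarith)
  rw [sub_sub_sub_cancel_right] at hLip
  linarith

theorem abs_intervalIntegral_comp_sub_sub_le {U g : ℝ → ℝ} {LU : ℝ}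
    (hU : ∀ a b' : ℝ, |U a - U b'| ≤ LU * |a - b'|) (hg : Measurable g) (x₁ x₂ : ℝ) :
    |(∫ ζ in (0:ℝ)..1, U (x₂ - g ζ)) - ∫ ζ in (0:ℝ)..1, U (x₁ - g ζ)| ≤
      LU * |x₂ - x₁| := by
  have hUc : Continuous U := by
    have hLU : 0 ≤ LU := by simpa using (abs_nonneg _).trans (hU 1 0)
    refine (LipschitzWith.of_dist_le_mul (K := LU.toNNReal) fun a b' => ?_).continuous
    simpa [Real.dist_eq, Real.coe_toNNReal _ hLU] using hU a b'
  have hmeas : ∀ x, AEStronglyMeasurable (fun ζ => U (x - g ζ)) :=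
    fun x => (hUc.measurable.comp (measurable_const.sub hg)).aestronglyMeasurable
  simpa using abs_intervalIntegral_sub_le_of_abs_sub_le (a := 0) (b := 1) (hmeas x₂) (hmeas x₁)
    fun ζ => (hU _ _).trans_eq (by rw [sub_sub_sub_cancel_right])

theorem map_restrict_apply_le_of_abs_sub_le_mul {f : ℝ → ℝ} {s A : Set ℝ} {K : ℝ}
    (hf : Measurable f) (hA : MeasurableSet A)
    (hK : ∀ x ∈ s, ∀ y ∈ s, |x - y| ≤ K * |f x - f y|) :
    Measure.map f (volume.restrict s) A ≤ ENNReal.ofReal K * volume A := by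
  have hanti : AntilipschitzWith K.toNNReal (s.domRestrict f) :=
    AntilipschitzWith.of_le_mul_dist fun x y => by
      simp only [Subtype.dist_eq, Real.dist_eq, Set.domRestrict_apply]
      exact (hK x x.2 y y.2).trans
        (mul_le_mul_of_nonneg_right (Real.le_coe_toNNReal K) (abs_nonneg _))
  set T : Set s := (↑) ⁻¹' (f ⁻¹' A)
  rw [Measure.map_apply hf hA, Measure.restrict_apply (hf hA), inter_comm,
    ← Subtype.image_preimage_coe, ← hausdorffMeasure_real,
    isometry_subtype_coe.hausdorffMeasure_image (Or.inl zero_le_one)]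
  calc μH[1] T ≤ (K.toNNReal : ENNReal) ^ (1 : ℝ) * μH[1] (s.domRestrict f '' T) :=
        hanti.le_hausdorffMeasure_image zero_le_one T
    _ ≤ ENNReal.ofReal K * μH[1] A := by
        rw [ENNReal.rpow_one]
        gcongr
        · exact le_rfl
        rintro _ ⟨x, hx, rfl⟩
        exact hx

theorem quantile_sub_lower_bound {Lv LU lam b : ℝ} (hLv : 0 < Lv) (hLU : 0 < LU)
    (hlam : 0 ≤ lam) (hb : 0 ≤ b) {v U : ℝ → ℝ}
    (hv : ∀ a b' : ℝ, |v a - v b'| ≤ Lv * |a - b'|)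
    (hU : ∀ a b' : ℝ, |U a - U b'| ≤ LU * |a - b'|)
    (hvdec : ∀ r₁ r₂ : ℝ, r₁ ≤ r₂ → v r₂ - v r₁ ≤ -b * (r₂ - r₁))
    {X : ℝ → ℝ → ℝ} (hXmeas : ∀ t : ℝ, Measurable (fun z => X z t))
    (hode : ∀ z ∈ Set.Icc (0:ℝ) 1, ∀ t, 0 ≤ t →
      HasDerivAt (X z) (v ((∫ ζ in (0:ℝ)..1, U (X z t - X ζ t)) - lam * z)) t)
    (hinit : MonotoneOn (fun z => X z 0) (Set.Icc (0:ℝ) 1))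
    {t : ℝ} (ht : 0 ≤ t) {z₁ z₂ : ℝ} (hz₁ : z₁ ∈ Icc (0:ℝ) 1) (hz₂ : z₂ ∈ Icc (0:ℝ) 1)
    (hz : z₁ ≤ z₂) :
    b * lam * (z₂ - z₁) / (Lv * LU) * (1 - Real.exp (-(Lv * LU) * t)) ≤
      X z₂ t - X z₁ t := by
  refine le_of_deriv_ge_sub_mul_abs (by have := sub_nonneg.2 hz; positivity) (mul_pos hLv hLU) ht
    (fun s hs => (hode z₂ hz₂ s hs.1).sub (hode z₁ hz₁ s hs.1)) (fun s _ => ?_)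
    (sub_nonneg.2 (hinit hz₁ hz₂ hz))
  have hint := abs_intervalIntegral_comp_sub_sub_le hU (hXmeas s) (X z₁ s) (X z₂ s)
  have hv' := le_apply_sub_apply_of_lipschitz_of_decreasing hv hvdec
    (x₁ := ∫ ζ in (0:ℝ)..1, U (X z₁ s - X ζ s))
    (x₂ := ∫ ζ in (0:ℝ)..1, U (X z₂ s - X ζ s))
    (mul_le_mul_of_nonneg_left hz hlam)
  rw [Pi.sub_apply]
  linarith [mul_le_mul_of_nonneg_left hint hLv.le]

/-- Measure-to-`L^∞` smoothing: under the quantile-equation assumptions, the pushforward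
measure `ρ(·,t) = X(·,t)_# Leb|_{[0,1]}` satisfies
`‖ρ(·,t)‖_{L^∞} ≤ (Lip(v)Lip(U)/(bλ)) (1 - e^{-Lip(v)Lip(U)t})⁻¹` for all `t > 0`. -/
theorem stmt_10 (Lv LU lam b : ℝ) (hLv : 0 < Lv) (hLU : 0 < LU) (hlam : 0 < lam) (hb : 0 < b)
    (v U : ℝ → ℝ)
    (hv : ∀ a b' : ℝ, |v a - v b'| ≤ Lv * |a - b'|)
    (hU : ∀ a b' : ℝ, |U a - U b'| ≤ LU * |a - b'|)
    (hvdec : ∀ r₁ r₂ : ℝ, r₁ ≤ r₂ → v r₂ - v r₁ ≤ -b * (r₂ - r₁))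
    (X : ℝ → ℝ → ℝ) (hXmeas : ∀ t : ℝ, Measurable (fun z => X z t))
    (hode : ∀ z ∈ Set.Icc (0:ℝ) 1, ∀ t, 0 ≤ t →
      HasDerivAt (X z) (v ((∫ ζ in (0:ℝ)..1, U (X z t - X ζ t)) - lam * z)) t)
    (hinit : MonotoneOn (fun z => X z 0) (Set.Icc (0:ℝ) 1)) :
    ∀ t, 0 < t → ∀ A : Set ℝ, MeasurableSet A →
      Measure.map (fun z => X z t) (volume.restrict (Set.Icc (0:ℝ) 1)) A ≤
        ENNReal.ofReal (Lv * LU / (b * lam) * (1 - Real.exp (-(Lv * LU) * t))⁻¹) *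
          volume A := by
  intro t ht A hA
  set E := 1 - Real.exp (-(Lv * LU) * t)
  have hE : 0 < E := by
    rw [sub_pos, Real.exp_lt_one_iff]
    nlinarith [mul_pos (mul_pos hLv hLU) ht]
  refine map_restrict_apply_le_of_abs_sub_le_mul (hXmeas t) hA fun z₁ hz₁ z₂ hz₂ => ?_
  wlog hz : z₁ ≤ z₂ generalizing z₁ z₂
  · rw [abs_sub_comm, abs_sub_comm (X z₁ t)]
    exact this z₂ hz₂ z₁ hz₁ (le_of_not_ge hz)
  have hslope := quantile_sub_lower_bound hLv hLU hlam.le hb.le hv hU hvdec hXmeas hode hinit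
    ht.le hz₁ hz₂ hz
  have hc : 0 ≤ b * lam * (z₂ - z₁) / (Lv * LU) * E := by
    have := sub_nonneg.2 hz; positivity
  rw [abs_sub_comm, abs_of_nonneg (sub_nonneg.2 hz), abs_sub_comm,
    abs_of_nonneg (hc.trans hslope)]
  calc z₂ - z₁ = Lv * LU / (b * lam) * E⁻¹ * (b * lam * (z₂ - z₁) / (Lv * LU) * E) := by
        field_simp
    _ ≤ _ := mul_le_mul_of_nonneg_left hslope (by positivity)
end

section
/- Two solutions X₁, X₂ of the quantile equation ∂ₜX = A[X] in L^p([0,1]) with A Lipschitz of constant C satisfy ‖X₁(t) - X₂(t)‖_{L^p} ≤ e^{Ct}‖X₁(0) - X₂(0)‖_{L^p}; consequently the corresponding measures satisfy the Wasserstein stability estimate W_p(ρ₁(·,t), ρ₂(·,t)) ≤ e^{Ct} W_p(ρ₁(·,0), ρ₂(·,0)). -/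
open MeasureTheory
open scoped ENNReal NNReal

/-- Gronwall stability for the quantile equation `∂ₜX = A[X]` in `L^p([0,1])` with `A`
Lipschitz of constant `C`: `‖X₁(t) - X₂(t)‖_p ≤ e^{Ct} ‖X₁(0) - X₂(0)‖_p`.  Consequently,
since `ρ ↦ X_ρ` is an isometry onto quantile functions, the corresponding measures satisfy
the Wasserstein stability estimate `W_p(ρ₁(t),ρ₂(t)) ≤ e^{Ct} W_p(ρ₁(0),ρ₂(0))`. -/
theorem stmt_12 (p : ℝ≥0∞) [Fact (1 ≤ p)]
    (C : ℝ≥0)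
    (A : Lp ℝ p (volume.restrict (Set.Icc (0:ℝ) 1)) →
         Lp ℝ p (volume.restrict (Set.Icc (0:ℝ) 1)))
    (hA : LipschitzWith C A)
    (X₁ X₂ : ℝ → Lp ℝ p (volume.restrict (Set.Icc (0:ℝ) 1)))
    (hode₁ : ∀ t, 0 ≤ t → HasDerivAt X₁ (A (X₁ t)) t)
    (hode₂ : ∀ t, 0 ≤ t → HasDerivAt X₂ (A (X₂ t)) t)
    (W : ℝ → ℝ)
    -- `W t` is the `p`-Wasserstein distance between the measures `ρ₁(t)` and `ρ₂(t)`,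
    -- which by the isometric quantile representation equals the `L^p` distance:
    (hW : ∀ t, W t = ‖X₁ t - X₂ t‖) :
    ∀ t, 0 ≤ t →
      ‖X₁ t - X₂ t‖ ≤ Real.exp (C * t) * ‖X₁ 0 - X₂ 0‖ ∧
      W t ≤ Real.exp (C * t) * W 0 := by
  intro t ht
  have key : dist (X₁ t) (X₂ t) ≤ dist (X₁ 0) (X₂ 0) * Real.exp (C * (t - 0)) := by
    apply dist_le_of_trajectories_ODE (v := fun _ x => A x) (fun _ => hA)
      (fun s hs => ((hode₁ s hs.1).continuousAt.continuousWithinAt))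
      (fun s hs => (hode₁ s hs.1).hasDerivWithinAt)
      (fun s hs => ((hode₂ s hs.1).continuousAt.continuousWithinAt))
      (fun s hs => (hode₂ s hs.1).hasDerivWithinAt)
      le_rfl t ⟨ht, le_rfl⟩
  rw [sub_zero] at key
  have h1 : ‖X₁ t - X₂ t‖ ≤ Real.exp (C * t) * ‖X₁ 0 - X₂ 0‖ := by
    rw [← dist_eq_norm, ← dist_eq_norm, mul_comm]
    exact key
  exact ⟨h1, by rw [hW t, hW 0]; exact h1⟩
end

section
/- Let x₀(t),…,x_N(t) solve the ODE system ẋᵢ = v(m_N Σ_{k=0}^N U(xᵢ - x_k) - m_N λ(i+1)) with m_N = 1/N, v Lipschitz satisfying v(ρ₂)-v(ρ₁) ≤ -b(ρ₂-ρ₁) for ρ₂ ≥ ρ₁, U Lipschitz, λ > 0, and initial data x₀(0) ≤ x₁(0) ≤ … ≤ x_N(0). Then for all i and all t > 0, x_{i+1}(t) - xᵢ(t) ≥ (bλ m_N/(2 Lip(v) Lip(U)))·(1 - e^{-2 Lip(v) Lip(U) t}); in particular the particles are strictly ordered for t > 0. -/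
/-!
Write `d = x_{i+1} - x_i`. Its derivative is `v(ρ_{i+1}) - v(ρ_i)`, where the densities differ by
`-m_N λ` plus an interaction term of size at most `2 Lip(U) |d|`. Monotonicity of `v` turns the
`-m_N λ` into a gain of `b λ m_N`, and Lipschitz continuity bounds the loss, so
`d' ≥ b λ m_N - K |d|` with `K = 2 Lip(v) Lip(U)`. Comparison with the solution
`(b λ m_N / K) (1 - e^{-K t})` of `y' = b λ m_N - K y`, `y(0) = 0`, gives the bound.
-/

open Set Real

/-- A barrier argument: `g ≤ ε e^{(K+1)(x-a)}` for every `ε > 0`. -/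
theorem nonpos_of_deriv_le_mul_abs {g g' : ℝ → ℝ} {K a b : ℝ}
    (hg : ContinuousOn g (Icc a b)) (hg' : ∀ x ∈ Ico a b, HasDerivWithinAt g (g' x) (Ici x) x)
    (ha : g a ≤ 0) (bound : ∀ x ∈ Ico a b, g' x ≤ K * |g x|) :
    ∀ ⦃x⦄, x ∈ Icc a b → g x ≤ 0 := by
  intro x hx
  have barrier : ∀ ε > 0, g x ≤ ε * exp ((K + 1) * (x - a)) := by
    intro ε hε
    refine image_le_of_deriv_right_lt_deriv_boundary hg hg'
      (B := fun y => ε * exp ((K + 1) * (y - a)))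
      (B' := fun y => ε * exp ((K + 1) * (y - a)) * (K + 1)) (by simpa using ha.trans hε.le)
      (fun y => ?_) (fun y hy hgy => ?_) hx
    · have := ((hasDerivAt_id y).sub_const a).const_mul (K + 1) |>.exp |>.const_mul ε
      simpa [mul_assoc] using this
    · have hB : 0 < ε * exp ((K + 1) * (y - a)) := by positivity
      calc g' y ≤ K * |g y| := bound y hy
        _ = K * (ε * exp ((K + 1) * (y - a))) := by rw [hgy, abs_of_pos hB]
        _ < _ := by nlinarith
  by_contra! hpos
  have hc : 0 < exp ((K + 1) * (x - a)) := exp_pos _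
  have := barrier (g x / (2 * exp ((K + 1) * (x - a)))) (by positivity)
  rw [div_mul_eq_mul_div, mul_div_mul_right _ _ hc.ne'] at this
  linarith

theorem le_of_deriv_ge_sub_mul_abs_s14 {d d' : ℝ → ℝ} {a K : ℝ} (ha : 0 ≤ a) (hK : 0 < K)
    (hd : ∀ s, 0 ≤ s → HasDerivAt d (d' s) s) (hd' : ∀ s, 0 ≤ s → a - K * |d s| ≤ d' s)
    (hd0 : 0 ≤ d 0) {t : ℝ} (ht : 0 ≤ t) : a / K * (1 - exp (-K * t)) ≤ d t := by
  set y : ℝ → ℝ := fun s => a / K * (1 - exp (-K * s))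
  have hy : ∀ s, HasDerivAt y (a * exp (-K * s)) s := fun s => by
    have := (((hasDerivAt_id s).const_mul (-K)).exp.const_sub 1).const_mul (a / K)
    simp only [id] at this
    exact this.congr_deriv (by field_simp)
  have hy_nonneg : ∀ s, 0 ≤ s → 0 ≤ y s := fun s hs => by
    have : exp (-K * s) ≤ 1 := exp_le_one_iff.2 (by nlinarith)
    have : 0 ≤ a / K := by positivity
    simp only [y]
    nlinarith
  have hKy : ∀ s, K * y s = a * (1 - exp (-K * s)) := fun s => by
    simp only [y]
    field_simp
  -- `g' ≤ K |g|` for `g = y - d`, because `|d| ≤ |g| + y`.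
  have key := nonpos_of_deriv_le_mul_abs (g := fun s => y s - d s) (K := K) (a := 0) (b := t)
    (fun s hs => ((hy s).sub (hd s hs.1)).continuousAt.continuousWithinAt)
    (fun s hs => ((hy s).sub (hd s hs.1)).hasDerivWithinAt)
    (by simpa [y] using hd0)
    (fun s hs => by
      have habs : |d s| ≤ |y s - d s| + y s := by
        have := abs_sub (y s) (y s - d s)
        rwa [sub_sub_cancel, abs_of_nonneg (hy_nonneg s hs.1), add_comm] at this
      have := hd' s hs.1
      nlinarith [hKy s])
    (x := t) ⟨ht, le_rfl⟩
  simpa [y, sub_nonpos] using key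

section Velocity

variable {v : ℝ → ℝ} {Lv b : ℝ} (hv : ∀ r₁ r₂ : ℝ, |v r₁ - v r₂| ≤ Lv * |r₁ - r₂|)
  (hvdec : ∀ r₁ r₂ : ℝ, r₁ ≤ r₂ → v r₂ - v r₁ ≤ -b * (r₂ - r₁))
include hv

theorem nonneg_of_lipschitz : 0 ≤ Lv := by
  simpa using (abs_nonneg _).trans (hv 1 0)

include hvdec

theorem le_of_lipschitz_of_decay : b ≤ Lv := by
  have h₁ : v 1 - v 0 ≤ -b := by simpa using hvdec 0 1 zero_le_one
  have h₂ : |v 1 - v 0| ≤ Lv := by simpa using hv 1 0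
  linarith [neg_abs_le (v 1 - v 0)]

theorem le_sub_of_lipschitz_of_decay (hb : 0 ≤ b) {a r₁ r₂ : ℝ} (ha : 0 ≤ a) :
    b * a - Lv * |r₂ - r₁ + a| ≤ v r₂ - v r₁ := by
  have hbLv := le_of_lipschitz_of_decay hv hvdec
  set w := r₂ - r₁ + a
  rcases le_or_gt r₂ r₁ with hle | hlt
  · have hdec := hvdec r₂ r₁ hle
    have : b * w ≤ Lv * |w| := calc
      b * w ≤ b * |w| := mul_le_mul_of_nonneg_left (le_abs_self w) hb
      _ ≤ Lv * |w| := mul_le_mul_of_nonneg_right hbLv (abs_nonneg w)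
    linarith
  · have hlip := hv r₂ r₁
    rw [abs_of_pos (sub_pos.2 hlt)] at hlip
    have : Lv * w ≤ Lv * |w| := mul_le_mul_of_nonneg_left (le_abs_self w) (nonneg_of_lipschitz hv)
    nlinarith [neg_abs_le (v r₂ - v r₁), mul_le_mul_of_nonneg_right hbLv ha]

end Velocity

noncomputable def discreteDensity (N : ℕ) (lam : ℝ) (U : ℝ → ℝ) (y : ℕ → ℝ) (i : ℕ) : ℝ :=
  (1 / N : ℝ) * ∑ k ∈ Finset.range (N + 1), U (y i - y k) - (1 / N : ℝ) * lam * (i + 1)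

theorem abs_discreteDensity_succ_sub_add_le {N : ℕ} (hN : 1 ≤ N) {lam LU : ℝ} {U : ℝ → ℝ}
    (hU : ∀ r₁ r₂ : ℝ, |U r₁ - U r₂| ≤ LU * |r₁ - r₂|) (y : ℕ → ℝ) (i : ℕ) :
    |discreteDensity N lam U y (i + 1) - discreteDensity N lam U y i + 1 / N * lam| ≤
      2 * LU * |y (i + 1) - y i| := by
  have hNR : (1 : ℝ) ≤ N := by exact_mod_cast hN
  have hLU : 0 ≤ LU := by simpa using (abs_nonneg _).trans (hU 1 0)
  have hsum : |∑ k ∈ Finset.range (N + 1), (U (y (i + 1) - y k) - U (y i - y k))| ≤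
      (N + 1) * (LU * |y (i + 1) - y i|) := by
    calc _ ≤ ∑ k ∈ Finset.range (N + 1), |U (y (i + 1) - y k) - U (y i - y k)| :=
          Finset.abs_sum_le_sum_abs _ _
      _ ≤ ∑ _k ∈ Finset.range (N + 1), LU * |y (i + 1) - y i| :=
          Finset.sum_le_sum fun k _ => by simpa using hU (y (i + 1) - y k) (y i - y k)
      _ = _ := by simp
  have hdiff : discreteDensity N lam U y (i + 1) - discreteDensity N lam U y i + 1 / N * lam =
      1 / N * ∑ k ∈ Finset.range (N + 1), (U (y (i + 1) - y k) - U (y i - y k)) := by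
    simp only [discreteDensity, Finset.sum_sub_distrib]
    push_cast
    ring
  rw [hdiff, abs_mul, abs_of_pos (by positivity)]
  calc 1 / N * |∑ k ∈ Finset.range (N + 1), (U (y (i + 1) - y k) - U (y i - y k))|
      ≤ 1 / N * ((N + 1) * (LU * |y (i + 1) - y i|)) := by gcongr
    _ = (1 + 1 / N) * (LU * |y (i + 1) - y i|) := by field_simp
    _ ≤ 2 * (LU * |y (i + 1) - y i|) := by
        gcongr
        linarith [(div_le_one (by positivity : (0 : ℝ) < N)).2 hNR]
    _ = _ := by ring

theorem sub_mul_abs_le_velocity_sub {N : ℕ} (hN : 1 ≤ N) {Lv LU lam b : ℝ} (hlam : 0 ≤ lam)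
    {v U : ℝ → ℝ} (hv : ∀ r₁ r₂ : ℝ, |v r₁ - v r₂| ≤ Lv * |r₁ - r₂|)
    (hU : ∀ r₁ r₂ : ℝ, |U r₁ - U r₂| ≤ LU * |r₁ - r₂|)
    (hvdec : ∀ r₁ r₂ : ℝ, r₁ ≤ r₂ → v r₂ - v r₁ ≤ -b * (r₂ - r₁)) (hb : 0 ≤ b)
    (y : ℕ → ℝ) (i : ℕ) :
    b * lam * (1 / N) - 2 * Lv * LU * |y (i + 1) - y i| ≤
      v (discreteDensity N lam U y (i + 1)) - v (discreteDensity N lam U y i) := by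
  have hgain := le_sub_of_lipschitz_of_decay hv hvdec hb (a := 1 / N * lam)
    (r₁ := discreteDensity N lam U y i) (r₂ := discreteDensity N lam U y (i + 1)) (by positivity)
  have hloss := mul_le_mul_of_nonneg_left
    (abs_discreteDensity_succ_sub_add_le hN (lam := lam) hU y i) (nonneg_of_lipschitz hv)
  linarith

theorem stmt_14_general (N : ℕ) (Lv LU lam b : ℝ)
    (hLU : 0 < LU) (hlam : 0 < lam) (hb : 0 < b)
    (v U : ℝ → ℝ)
    (hv : ∀ a b' : ℝ, |v a - v b'| ≤ Lv * |a - b'|)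
    (hU : ∀ a b' : ℝ, |U a - U b'| ≤ LU * |a - b'|)
    (hvdec : ∀ r₁ r₂ : ℝ, r₁ ≤ r₂ → v r₂ - v r₁ ≤ -b * (r₂ - r₁))
    (x : ℕ → ℝ → ℝ)
    (hode : ∀ i ≤ N, ∀ t : ℝ, 0 ≤ t →
      HasDerivAt (x i)
        (v ((1 / N : ℝ) * ∑ k ∈ Finset.range (N + 1), U (x i t - x k t) -
          (1 / N : ℝ) * lam * (i + 1))) t)
    (hinit : ∀ i < N, x i 0 ≤ x (i + 1) 0) :
    ∀ i < N, ∀ t : ℝ, 0 < t →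
      x (i + 1) t - x i t ≥
        b * lam * (1 / N : ℝ) / (2 * Lv * LU) * (1 - Real.exp (-(2 * Lv * LU) * t)) := by
  intro i hi t ht
  have hN : 1 ≤ N := by omega
  have hLv : 0 < Lv := hb.trans_le (le_of_lipschitz_of_decay hv hvdec)
  have hgap : ∀ s, 0 ≤ s → HasDerivAt (fun s => x (i + 1) s - x i s)
      (v (discreteDensity N lam U (x · s) (i + 1)) - v (discreteDensity N lam U (x · s) i)) s :=
    fun s hs => (hode (i + 1) hi s hs).sub (hode i hi.le s hs)
  exact le_of_deriv_ge_sub_mul_abs_s14 (by positivity) (by positivity) hgap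
    (fun s _ => sub_mul_abs_le_velocity_sub hN hlam.le hv hU hvdec hb.le (x · s) i)
    (sub_nonneg.2 (hinit i hi)) ht.le

/-- Discrete smoothing effect for the particle system
`ẋᵢ = v(m_N ∑ₖ U(xᵢ - xₖ) - m_N λ (i+1))`, `m_N = 1/N`: if the initial data are ordered,
then for all `t > 0`,
`x_{i+1}(t) - xᵢ(t) ≥ (bλ m_N/(2 Lip(v) Lip(U))) (1 - e^{-2 Lip(v) Lip(U) t})`;
in particular the particles are strictly ordered for `t > 0`. -/
theorem stmt_14 (N : ℕ) (hN : 1 ≤ N) (Lv LU lam b : ℝ)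
    (hLv : 0 < Lv) (hLU : 0 < LU) (hlam : 0 < lam) (hb : 0 < b)
    (v U : ℝ → ℝ)
    (hv : ∀ a b' : ℝ, |v a - v b'| ≤ Lv * |a - b'|)
    (hU : ∀ a b' : ℝ, |U a - U b'| ≤ LU * |a - b'|)
    (hvdec : ∀ r₁ r₂ : ℝ, r₁ ≤ r₂ → v r₂ - v r₁ ≤ -b * (r₂ - r₁))
    (x : ℕ → ℝ → ℝ)
    (hode : ∀ i ≤ N, ∀ t : ℝ, 0 ≤ t →
      HasDerivAt (x i)
        (v ((1 / N : ℝ) * ∑ k ∈ Finset.range (N + 1), U (x i t - x k t) -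
          (1 / N : ℝ) * lam * (i + 1))) t)
    (hinit : ∀ i < N, x i 0 ≤ x (i + 1) 0) :
    ∀ i < N, ∀ t : ℝ, 0 < t →
      x (i + 1) t - x i t ≥
        b * lam * (1 / N : ℝ) / (2 * Lv * LU) * (1 - Real.exp (-(2 * Lv * LU) * t)) :=
  stmt_14_general N Lv LU lam b hLU hlam hb v U hv hU hvdec x hode hinit
end

section
/- For ordered particles x₀ ≤ … ≤ x_N solving ẋᵢ = v(m_N Σ_{k>i} V(xᵢ - x_k)), consecutive velocity differences satisfy |ẋ_{i+1}(t) - ẋᵢ(t)| ≤ Lip(v)·(m_N(λ + Lip(V)·M) + Lip(V)·(x_{i+1}(t) - xᵢ(t))), where M bounds x_N(t) - x₀(t). -/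
/-!
The velocity of particle `i` is `v` applied to `m_N` times the interaction sum over the particles
ahead of it. Passing from `i` to `i + 1` drops the single term `V (xᵢ - x_{i+1})`, which is at most
`λ + Lip(V)·M` since `V` is Lipschitz on `(-∞, 0]` with `V 0 = λ`; every remaining term moves by at
most `Lip(V)·(x_{i+1} - xᵢ)`, because ordering keeps both arguments in `(-∞, 0]`. There are at most
`N` such terms, and the factor `m_N = 1/N` absorbs their count.
-/

open Finset

noncomputable def aheadSum (V : ℝ → ℝ) (x : ℕ → ℝ) (N i : ℕ) : ℝ :=
  ∑ k ∈ Ioc i N, V (x i - x k)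

lemma abs_sum_sub_sum_le_card_mul {ι : Type*} {s : Finset ι} {f g : ι → ℝ} {c : ℝ}
    (h : ∀ k ∈ s, |f k - g k| ≤ c) :
    |∑ k ∈ s, f k - ∑ k ∈ s, g k| ≤ s.card * c := by
  rw [← sum_sub_distrib]
  calc |∑ k ∈ s, (f k - g k)| ≤ ∑ k ∈ s, |f k - g k| := abs_sum_le_sum_abs _ _
    _ ≤ s.card * c := by simpa using sum_le_card_nsmul s _ c h

lemma abs_le_abs_zero_add_of_lipschitzOn_nonpos {V : ℝ → ℝ} {LV a : ℝ}
    (hVlip : ∀ a b : ℝ, a ≤ 0 → b ≤ 0 → |V a - V b| ≤ LV * |a - b|) (ha : a ≤ 0) :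
    |V a| ≤ |V 0| + LV * |a| := by
  have := hVlip a 0 ha le_rfl
  rw [sub_zero] at this
  calc |V a| = |(V a - V 0) + V 0| := by rw [sub_add_cancel]
    _ ≤ |V a - V 0| + |V 0| := abs_add_le _ _
    _ ≤ |V 0| + LV * |a| := by linarith

section Ordered

variable {V : ℝ → ℝ} {LV : ℝ} {x : ℕ → ℝ} {N i : ℕ}

lemma aheadSum_eq_add_sum (hi : i < N) :
    aheadSum V x N i = V (x i - x (i + 1)) + ∑ k ∈ Ioc (i + 1) N, V (x i - x k) := by
  rw [aheadSum, ← insert_Ioc_add_one_left_eq_Ioc hi, sum_insert left_notMem_Ioc]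

lemma abs_aheadSum_succ_sub_le
    (hLV : 0 ≤ LV) (hVlip : ∀ a b : ℝ, a ≤ 0 → b ≤ 0 → |V a - V b| ≤ LV * |a - b|)
    (hord : ∀ j k : ℕ, j ≤ k → k ≤ N → x j ≤ x k) (hi : i < N) :
    |aheadSum V x N (i + 1) - aheadSum V x N i| ≤
      |V (x i - x (i + 1))| + N * (LV * (x (i + 1) - x i)) := by
  have hgap : 0 ≤ x (i + 1) - x i := sub_nonneg.2 (hord i (i + 1) i.le_succ hi)
  have hterm : ∀ k ∈ Ioc (i + 1) N,
      |V (x (i + 1) - x k) - V (x i - x k)| ≤ LV * (x (i + 1) - x i) := by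
    intro k hk
    obtain ⟨hik, hkN⟩ := mem_Ioc.1 hk
    calc |V (x (i + 1) - x k) - V (x i - x k)|
        ≤ LV * |(x (i + 1) - x k) - (x i - x k)| :=
          hVlip _ _ (sub_nonpos.2 (hord _ k hik.le hkN)) (sub_nonpos.2 (hord i k (by omega) hkN))
      _ = LV * (x (i + 1) - x i) := by rw [sub_sub_sub_cancel_right, abs_of_nonneg hgap]
  have hcard : ((Ioc (i + 1) N).card : ℝ) ≤ N := by
    rw [Nat.card_Ioc]; exact_mod_cast Nat.sub_le N (i + 1)
  have hsum := abs_sum_sub_sum_le_card_mul hterm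
  have hcount : ((Ioc (i + 1) N).card : ℝ) * (LV * (x (i + 1) - x i)) ≤
      N * (LV * (x (i + 1) - x i)) :=
    mul_le_mul_of_nonneg_right hcard (mul_nonneg hLV hgap)
  rw [aheadSum_eq_add_sum hi, aheadSum]
  calc |∑ k ∈ Ioc (i + 1) N, V (x (i + 1) - x k) -
        (V (x i - x (i + 1)) + ∑ k ∈ Ioc (i + 1) N, V (x i - x k))|
      = |(∑ k ∈ Ioc (i + 1) N, V (x (i + 1) - x k) - ∑ k ∈ Ioc (i + 1) N, V (x i - x k)) -
          V (x i - x (i + 1))| := by rw [sub_add_eq_sub_sub_swap]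
    _ ≤ |∑ k ∈ Ioc (i + 1) N, V (x (i + 1) - x k) - ∑ k ∈ Ioc (i + 1) N, V (x i - x k)| +
          |V (x i - x (i + 1))| := abs_sub _ _
    _ ≤ |V (x i - x (i + 1))| + N * (LV * (x (i + 1) - x i)) := by linarith

end Ordered

lemma abs_sub_comp_mul_le {v : ℝ → ℝ} {Lv c a b B : ℝ}
    (hv : ∀ a b : ℝ, |v a - v b| ≤ Lv * |a - b|) (hLv : 0 ≤ Lv) (hc : 0 ≤ c)
    (hab : |a - b| ≤ B) :
    |v (c * a) - v (c * b)| ≤ Lv * (c * B) := by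
  calc |v (c * a) - v (c * b)| ≤ Lv * |c * a - c * b| := hv _ _
    _ = Lv * (c * |a - b|) := by rw [← mul_sub, abs_mul, abs_of_nonneg hc]
    _ ≤ Lv * (c * B) := by gcongr

theorem stmt_16_general (N : ℕ) (Lv LV lam M : ℝ)
    (hLv : 0 ≤ Lv) (hLV : 0 ≤ LV) (hlam : 0 < lam)
    (v V : ℝ → ℝ)
    (hv : ∀ a b : ℝ, |v a - v b| ≤ Lv * |a - b|)
    (hVlip : ∀ a b : ℝ, a ≤ 0 → b ≤ 0 → |V a - V b| ≤ LV * |a - b|)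
    (hV0 : V 0 = lam)
    (x : ℕ → ℝ)
    (hord : ∀ j k : ℕ, j ≤ k → k ≤ N → x j ≤ x k)
    (hdiam : x N - x 0 ≤ M) :
    ∀ i < N,
      |v ((1 / N : ℝ) * ∑ k ∈ Finset.Ioc (i + 1) N, V (x (i + 1) - x k)) -
          v ((1 / N : ℝ) * ∑ k ∈ Finset.Ioc i N, V (x i - x k))| ≤
        Lv * ((1 / N : ℝ) * (lam + LV * M) + LV * (x (i + 1) - x i)) := by
  intro i hi
  have hNpos : (0 : ℝ) < N := by exact_mod_cast i.zero_le.trans_lt hi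
  have hgap : 0 ≤ x (i + 1) - x i := sub_nonneg.2 (hord i (i + 1) i.le_succ hi)
  have hgap_le : x (i + 1) - x i ≤ M := by
    linarith [hord 0 i i.zero_le hi.le, hord (i + 1) N hi le_rfl]
  have hdropped : |V (x i - x (i + 1))| ≤ lam + LV * M := by
    have h := abs_le_abs_zero_add_of_lipschitzOn_nonpos hVlip (sub_nonpos.2 (hord i _ i.le_succ hi))
    rw [hV0, abs_of_pos hlam, abs_sub_comm, abs_of_nonneg hgap] at h
    linarith [mul_le_mul_of_nonneg_left hgap_le hLV]
  have hsums := abs_aheadSum_succ_sub_le hLV hVlip hord hi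
  calc _ ≤ Lv * (1 / N * ((lam + LV * M) + N * (LV * (x (i + 1) - x i)))) :=
        abs_sub_comp_mul_le hv hLv (by positivity) (hsums.trans (by linarith))
    _ = Lv * ((1 / N : ℝ) * (lam + LV * M) + LV * (x (i + 1) - x i)) := by
        field_simp

/-- Bound on consecutive velocity differences for ordered particles solving
`ẋᵢ = v(m_N ∑_{k>i} V(xᵢ - xₖ))`:
`|ẋ_{i+1} - ẋᵢ| ≤ Lip(v)(m_N(λ + Lip(V)·M) + Lip(V)(x_{i+1} - xᵢ))`,
where `M` bounds the cloud diameter `x_N - x₀`. -/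
theorem stmt_16 (N : ℕ) (hN : 1 ≤ N) (Lv LV lam M : ℝ)
    (hLv : 0 ≤ Lv) (hLV : 0 ≤ LV) (hlam : 0 < lam) (hM : 0 ≤ M)
    (v V : ℝ → ℝ)
    (hv : ∀ a b : ℝ, |v a - v b| ≤ Lv * |a - b|)
    (hVsupp : ∀ y : ℝ, 0 < y → V y = 0)
    (hVlip : ∀ a b : ℝ, a ≤ 0 → b ≤ 0 → |V a - V b| ≤ LV * |a - b|)
    (hV0 : V 0 = lam)
    (x : ℕ → ℝ)
    (hord : ∀ j k : ℕ, j ≤ k → k ≤ N → x j ≤ x k)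
    (hdiam : x N - x 0 ≤ M) :
    ∀ i < N,
      |v ((1 / N : ℝ) * ∑ k ∈ Finset.Ioc (i + 1) N, V (x (i + 1) - x k)) -
          v ((1 / N : ℝ) * ∑ k ∈ Finset.Ioc i N, V (x i - x k))| ≤
        Lv * ((1 / N : ℝ) * (lam + LV * M) + LV * (x (i + 1) - x i)) :=
  stmt_16_general N Lv LV lam M hLv hLV hlam v V hv hVlip hV0 x hord hdiam
end

section
/- Assume additionally that V > 0 and V is non-decreasing on (-∞,0], and that the initial particle gaps satisfy x_{i+1}(0) - xᵢ(0) ≥ m_N/R for all i, where R > 0. Then for the particle system ẋᵢ = v(m_N Σ_{k>i} V(xᵢ - x_k)) with v strictly decreasing, the gaps satisfy x_{i+1}(t) - xᵢ(t) ≥ m_N/R for all t ≥ 0; equivalently the discrete density ρ^N(·,t) is bounded by R uniformly in time. -/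
/-!
Suppose that at some time every gap is at least `c = m_N / R` and the `j`-th gap equals `c`.
Then the particles are ordered, and since the `k`-th gap is at least the `j`-th one,
`x_{j+1} - x_{k+1} ≤ x_j - x_k ≤ 0`; by monotonicity of `V` the interaction of `j + 1` with
`k + 1` is at most that of `j` with `k`, while `j` also feels `x_N` through `V(x_j - x_N) > 0`.
So particle `j + 1` feels strictly less interaction and, `v` being strictly decreasing, moves
strictly faster than `j`: a gap equal to `c` is strictly increasing as long as all gaps are
`≥ c`. Real induction on the closed set of times at which all gaps are `≥ c` concludes.
-/

open Filter Topology Finset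

theorem HasDerivAt.eventually_gt_of_pos {f : ℝ → ℝ} {f' x : ℝ} (hf : HasDerivAt f f' x)
    (hf' : 0 < f') : ∀ᶠ y in 𝓝[>] x, f x < f y := by
  filter_upwards [(hasDerivAt_iff_tendsto_slope_left_right.1 hf).2.eventually (lt_mem_nhds hf'),
    self_mem_nhdsWithin] with y hslope hy
  rw [slope_def_field] at hslope
  exact sub_pos.1 ((div_pos_iff_of_pos_right (sub_pos.2 hy)).1 hslope)

theorem le_of_deriv_pos_at_boundary {ι : Type*} [Finite ι] {g g' : ι → ℝ → ℝ} {c : ℝ}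
    (hg : ∀ j, ∀ t ≥ 0, HasDerivAt (g j) (g' j t) t) (h0 : ∀ j, c ≤ g j 0)
    (hbdry : ∀ j, ∀ t ≥ 0, (∀ k, c ≤ g k t) → g j t = c → 0 < g' j t)
    {t : ℝ} (ht : 0 ≤ t) (j : ι) : c ≤ g j t := by
  let s : Set ℝ := (fun τ k => g k τ) ⁻¹' Set.pi Set.univ fun _ => Set.Ici c
  have hclosed : IsClosed (s ∩ Set.Icc 0 t) := by
    rw [Set.inter_comm]
    refine ContinuousOn.preimage_isClosed_of_isClosed ?_ isClosed_Icc
      (isClosed_set_pi fun _ _ => isClosed_Ici)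
    exact continuousOn_pi.2 fun k τ hτ => (hg k τ hτ.1).continuousAt.continuousWithinAt
  have hstay : ∀ τ ∈ s ∩ Set.Ico 0 t, s ∈ 𝓝[>] τ := by
    rintro τ ⟨hτs, hτ0, -⟩
    have hτs : ∀ k, c ≤ g k τ := fun k => hτs k (Set.mem_univ k)
    suffices ∀ᶠ σ in 𝓝[>] τ, ∀ k, c ≤ g k σ from
      this.mono fun σ hσ k _ => hσ k
    refine eventually_all.2 fun k => ?_
    rcases (hτs k).eq_or_lt with heq | hlt
    · exact ((hg k τ hτ0).eventually_gt_of_pos (hbdry k τ hτ0 hτs heq.symm)).mono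
        fun σ hσ => heq.le.trans hσ.le
    · exact (((hg k τ hτ0).continuousAt.eventually (lt_mem_nhds hlt)).filter_mono
        nhdsWithin_le_nhds).mono fun σ hσ => hσ.le
  exact hclosed.Icc_subset_of_forall_mem_nhdsWithin (fun k _ => h0 k) hstay
    ⟨ht, le_rfl⟩ j (Set.mem_univ j)

theorem sum_Ioc_succ_lt_sum_Ioc_of_min_gap {V : ℝ → ℝ} (hVpos : ∀ y ≤ 0, 0 < V y)
    (hVmono : MonotoneOn V (Set.Iic 0)) {y : ℕ → ℝ} {j n : ℕ} (hj : j ≤ n)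
    (hnonneg : 0 ≤ y (j + 1) - y j) (hmin : ∀ m ≤ n, y (j + 1) - y j ≤ y (m + 1) - y m) :
    ∑ k ∈ Ioc (j + 1) (n + 1), V (y (j + 1) - y k) < ∑ k ∈ Ioc j (n + 1), V (y j - y k) := by
  have hy : MonotoneOn y (Set.Iic (n + 1)) := monotoneOn_of_le_add_one Set.ordConnected_Iic
    fun m _ _ hm => by linarith [hmin m (by simpa using hm)]
  have hle : ∀ a ≤ n + 1, ∀ b ≤ n + 1, a ≤ b → y a - y b ≤ 0 := fun a ha b hb hab =>
    sub_nonpos.2 (hy (Set.mem_Iic.2 ha) (Set.mem_Iic.2 hb) hab)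
  have hshift : ∑ k ∈ Ioc (j + 1) (n + 1), V (y (j + 1) - y k)
      = ∑ m ∈ Ioc j n, V (y (j + 1) - y (m + 1)) := by
    rw [← map_add_right_Ioc j n 1, sum_map]
    rfl
  have hterm : ∀ m ∈ Ioc j n, V (y (j + 1) - y (m + 1)) ≤ V (y j - y m) := by
    intro m hm
    obtain ⟨hjm, hmn⟩ := mem_Ioc.1 hm
    exact hVmono (hle _ (by omega) _ (by omega) (by omega)) (hle _ (by omega) _ (by omega) hjm.le)
      (by linarith [hmin m hmn])
  have hlast : 0 < V (y j - y (n + 1)) := hVpos _ (hle _ (by omega) _ le_rfl (by omega))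
  rw [hshift, sum_Ioc_succ_top hj]
  linarith [sum_le_sum hterm]

theorem stmt_17_general (N : ℕ) (R : ℝ)
    (hR : 0 < R)
    (v V : ℝ → ℝ)
    (hvdec : StrictAnti v)
    (hVpos : ∀ y : ℝ, y ≤ 0 → 0 < V y)
    (hVmono : MonotoneOn V (Set.Iic (0:ℝ)))
    (x : ℕ → ℝ → ℝ)
    (hode : ∀ i ≤ N, ∀ t : ℝ, 0 ≤ t →
      HasDerivAt (x i)
        (v ((1 / N : ℝ) * ∑ k ∈ Finset.Ioc i N, V (x i t - x k t))) t)
    (hinit : ∀ i < N, (1 / N : ℝ) / R ≤ x (i + 1) 0 - x i 0) :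
    ∀ i < N, ∀ t : ℝ, 0 ≤ t → (1 / N : ℝ) / R ≤ x (i + 1) t - x i t := by
  intro i hi t ht
  obtain ⟨n, rfl⟩ : ∃ n, N = n + 1 := Nat.exists_eq_succ_of_ne_zero (by omega)
  have hc : 0 < (1 / (n + 1 : ℕ) : ℝ) / R := by positivity
  refine le_of_deriv_pos_at_boundary (ι := Fin (n + 1)) (g := fun j t => x (j + 1) t - x j t)
    (fun j t ht => (hode _ j.2 t ht).sub (hode _ j.2.le t ht)) (fun j => hinit j j.2) ?_ ht ⟨i, hi⟩
  intro j t ht hgaps hj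
  refine sub_pos.2 (hvdec (mul_lt_mul_of_pos_left ?_ (by positivity)))
  exact sum_Ioc_succ_lt_sum_Ioc_of_min_gap (y := fun k => x k t) hVpos hVmono j.is_le
    (hj ▸ hc.le) fun m hm => hj.trans_le (hgaps ⟨m, by omega⟩)

/-- Discrete maximum principle: if `V > 0` and non-decreasing on `(-∞,0]`, `v` is Lipschitz
and strictly decreasing, and the initial gaps satisfy `x_{i+1}(0) - xᵢ(0) ≥ m_N/R`, then the
particle system `ẋᵢ = v(m_N ∑_{k>i} V(xᵢ - xₖ))` preserves the gap bound
`x_{i+1}(t) - xᵢ(t) ≥ m_N/R` for all `t ≥ 0` (equivalently, the discrete density is bounded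
by `R` uniformly in time). -/
theorem stmt_17 (N : ℕ) (hN : 1 ≤ N) (Lv R lam : ℝ)
    (hLv : 0 ≤ Lv) (hR : 0 < R) (hlam : 0 < lam)
    (v V : ℝ → ℝ)
    (hv : ∀ a b : ℝ, |v a - v b| ≤ Lv * |a - b|)
    (hvdec : StrictAnti v)
    (hVpos : ∀ y : ℝ, y ≤ 0 → 0 < V y)
    (hVmono : MonotoneOn V (Set.Iic (0:ℝ)))
    (hVsupp : ∀ y : ℝ, 0 < y → V y = 0)
    (hV0 : V 0 = lam)
    (x : ℕ → ℝ → ℝ)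
    (hode : ∀ i ≤ N, ∀ t : ℝ, 0 ≤ t →
      HasDerivAt (x i)
        (v ((1 / N : ℝ) * ∑ k ∈ Finset.Ioc i N, V (x i t - x k t))) t)
    (hinit : ∀ i < N, (1 / N : ℝ) / R ≤ x (i + 1) 0 - x i 0) :
    ∀ i < N, ∀ t : ℝ, 0 ≤ t → (1 / N : ℝ) / R ≤ x (i + 1) t - x i t :=
  stmt_17_general N R hR v V hvdec hVpos hVmono x hode hinit
end
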